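/- arXiv:2503.15296 — 4 statements merged into one kernel-verified Lean document; each statement's English description precedes it below -/
import Mathlib

section
/- For every integer m ≥ 2, ⌊(2m−5+√(8m²−24m+17))/2⌋ = ⌊(1+√2)(m−3/2)⌋ − 1. -/
theorem stmt0 (m : ℤ) (hm : 2 ≤ m) :
    ⌊(2 * (m : ℝ) - 5 + Real.sqrt (8 * (m : ℝ) ^ 2 - 24 * m + 17)) / 2⌋ =
      ⌊(1 + Real.sqrt 2) * ((m : ℝ) - 3 / 2)⌋ - 1 := by
  set k : ℤ := 2 * m - 3 with hk
  have hk1 : (1 : ℤ) ≤ k := by omega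
  have hkR : (1 : ℝ) ≤ (k : ℝ) := by exact_mod_cast hk1
  have harg : (8 * (m : ℝ) ^ 2 - 24 * m + 17) = 2 * (k : ℝ) ^ 2 - 1 := by
    push_cast [hk]; ring
  have hargnn : (0 : ℝ) ≤ 2 * (k : ℝ) ^ 2 - 1 := by nlinarith
  have hs2 : (0 : ℝ) < Real.sqrt 2 := Real.sqrt_pos.mpr (by norm_num)
  have hs2sq : Real.sqrt 2 ^ 2 = 2 := Real.sq_sqrt (by norm_num)
  set N : ℤ := ⌊(2 * (m : ℝ) - 5 + (k : ℝ) * Real.sqrt 2) / 2⌋ with hN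
  have hRHS : (1 + Real.sqrt 2) * ((m : ℝ) - 3 / 2)
      = (2 * (m : ℝ) - 5 + (k : ℝ) * Real.sqrt 2) / 2 + 1 := by
    push_cast [hk]; ring
  have hfloorR : ⌊(1 + Real.sqrt 2) * ((m : ℝ) - 3 / 2)⌋ = N + 1 := by
    rw [hRHS, show (1:ℝ) = ((1:ℤ):ℝ) by norm_num, Int.floor_add_intCast]
  rw [harg, hfloorR]
  have hkpos : (0 : ℝ) < (k : ℝ) := lt_of_lt_of_le one_pos hkR
  have hupper : Real.sqrt (2 * (k : ℝ) ^ 2 - 1) < (k : ℝ) * Real.sqrt 2 := by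
    rw [Real.sqrt_lt' (by positivity)]
    nlinarith
  -- lower bound: N ≤ (2m-5 + sqrt(2k²-1))/2
  have hNle : (N : ℝ) ≤ (2 * (m : ℝ) - 5 + (k : ℝ) * Real.sqrt 2) / 2 := Int.floor_le _
  set t : ℤ := 2 * N - 2 * m + 5 with ht
  have htle : (t : ℝ) ≤ (k : ℝ) * Real.sqrt 2 := by
    push_cast [ht]; linarith
  have hlow : (t : ℝ) ≤ Real.sqrt (2 * (k : ℝ) ^ 2 - 1) := by
    rcases le_or_gt t 0 with h0 | h0
    · calc (t : ℝ) ≤ 0 := by exact_mod_cast h0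
        _ ≤ _ := Real.sqrt_nonneg _
    · have htR : (0 : ℝ) < (t : ℝ) := by exact_mod_cast h0
      have hsq : (t : ℝ) ^ 2 ≤ 2 * (k : ℝ) ^ 2 := by nlinarith
      have hsqZ : t ^ 2 ≤ 2 * k ^ 2 := by exact_mod_cast hsq
      have hodd : Odd t := ⟨N - m + 2, by omega⟩
      have hne : t ^ 2 ≠ 2 * k ^ 2 := by
        intro h
        have h1 : Odd (t ^ 2) := hodd.pow
        rw [h] at h1
        exact (Int.not_odd_iff_even.mpr ⟨k ^ 2, by ring⟩) h1
      have hsqZ' : t ^ 2 ≤ 2 * k ^ 2 - 1 := by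
        have := Int.add_one_le_iff.mpr (lt_of_le_of_ne hsqZ hne)
        linarith
      have : (t : ℝ) ^ 2 ≤ 2 * (k : ℝ) ^ 2 - 1 := by exact_mod_cast hsqZ'
      calc (t : ℝ) = Real.sqrt ((t : ℝ) ^ 2) := by
            rw [Real.sqrt_sq htR.le]
        _ ≤ _ := Real.sqrt_le_sqrt this
  have : ⌊(2 * (m : ℝ) - 5 + Real.sqrt (2 * (k : ℝ) ^ 2 - 1)) / 2⌋ = N := by
    rw [Int.floor_eq_iff]
    constructor
    · push_cast [ht] at hlow
      linarith
    · have h2 := Int.lt_floor_add_one ((2 * (m : ℝ) - 5 + (k : ℝ) * Real.sqrt 2) / 2)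
      rw [← hN] at h2
      linarith
  omega
end

section
/- Let k be a positive integer and p = ⌊(2k+1)/5⌋. Then there exist 2p pairwise distinct numbers α₁,…,α_p, β₁,…,β_p in the interval [1,k] of integers such that αᵢ + βᵢ = k + i for all 1 ≤ i ≤ p. -/
theorem stmt1 (k : ℕ) (hk : 0 < k) (p : ℕ) (hp : p = (2 * k + 1) / 5) :
    ∃ α β : Fin p → ℕ,
      (∀ i, α i ∈ Finset.Icc 1 k) ∧
      (∀ i, β i ∈ Finset.Icc 1 k) ∧
      (∀ i : Fin p, α i + β i = k + (i : ℕ) + 1) ∧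
      Function.Injective (Sum.elim α β) := by
  refine ⟨fun i => if p % 2 = 1 then
      (if (i : ℕ) ≤ p / 2 then p / 2 + 1 + 2 * i else 2 * i - p / 2)
    else
      (if (i : ℕ) = 0 then 1 else
        if (i : ℕ) ≤ p / 2 then 2 * i + p / 2 else 2 * i + 1 - p / 2),
    fun i => if p % 2 = 1 then
      (if (i : ℕ) ≤ p / 2 then k - p / 2 - i else k + p / 2 + 1 - i)
    else
      (if (i : ℕ) = 0 then k else
        if (i : ℕ) ≤ p / 2 then k + 1 - p / 2 - i else k + p / 2 - i),
    ?_, ?_, ?_, ?_⟩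
  · rintro ⟨i, hi⟩
    simp only [Finset.mem_Icc]
    split_ifs <;> omega
  · rintro ⟨i, hi⟩
    simp only [Finset.mem_Icc]
    split_ifs <;> omega
  · rintro ⟨i, hi⟩
    simp only
    split_ifs <;> omega
  · rintro (⟨i, hi⟩ | ⟨i, hi⟩) (⟨j, hj⟩ | ⟨j, hj⟩) hxy <;>
      simp only [Sum.elim_inl, Sum.elim_inr, Sum.inl.injEq, Sum.inr.injEq,
        Fin.mk.injEq, reduceCtorEq] at hxy ⊢ <;>
      split_ifs at hxy <;> omega
end

section
/- If a graph G on n vertices and m edges has a (1,1)-antimagic labeling, then (2n+1)² − 2(2m+1)² = −1. -/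
open Finset

theorem stmt11 {V : Type*} [Fintype V] [DecidableEq V]
    (G : SimpleGraph V) [DecidableRel G.Adj]
    (n m : ℕ) (hn : n = Fintype.card V) (hm : m = G.edgeFinset.card)
    (f : Sym2 V → ℕ) (hf : Set.BijOn f G.edgeSet (Set.Icc 1 m))
    (hφ : Finset.univ.val.map (fun v => ∑ e ∈ G.incidenceFinset v, f e) =
      (Multiset.range n).map (fun i => i + 1)) :
    (2 * (n : ℤ) + 1) ^ 2 - 2 * (2 * (m : ℤ) + 1) ^ 2 = -1 := by
  -- total of vertex sums
  have hsum : ∑ v : V, ∑ e ∈ G.incidenceFinset v, f e = ∑ i ∈ Finset.range n, (i + 1) := by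
    have h := congrArg Multiset.sum hφ
    rw [Finset.sum_eq_multiset_sum, Finset.sum_eq_multiset_sum, Finset.range_val]
    exact h
  -- handshake: double counting
  have hhand : ∑ v : V, ∑ e ∈ G.incidenceFinset v, f e = 2 * ∑ e ∈ G.edgeFinset, f e := by
    simp_rw [SimpleGraph.incidenceFinset_eq_filter]
    rw [Finset.sum_comm' (t' := G.edgeFinset) (s' := fun e => Finset.univ.filter (· ∈ e))]
    · rw [Finset.mul_sum]
      refine Finset.sum_congr rfl fun e he => ?_
      rw [Finset.sum_const]
      have : (Finset.univ.filter (· ∈ e)).card = 2 := by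
        induction e with
        | _ a b =>
          have hab : a ≠ b := by
            intro h
            exact (SimpleGraph.mem_edgeFinset.mp he).ne (by simp [h])
          have : Finset.univ.filter (· ∈ s(a, b)) = {a, b} := by
            ext x; simp [Sym2.mem_iff]
          rw [this, Finset.card_insert_of_notMem (by simp [hab]), Finset.card_singleton]
      rw [this]; ring
    · intro x y; simp [and_comm]
  -- image of edge labels
  have hedge : ∑ e ∈ G.edgeFinset, f e = ∑ i ∈ Finset.Icc 1 m, i := by
    refine Finset.sum_bij (fun e _ => f e) ?_ ?_ ?_ ?_
    · intro e he
      have := hf.mapsTo (SimpleGraph.mem_edgeFinset.mp he)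
      simpa using this
    · intro e₁ h₁ e₂ h₂ h
      exact hf.injOn (SimpleGraph.mem_edgeFinset.mp h₁) (SimpleGraph.mem_edgeFinset.mp h₂) h
    · intro b hb
      obtain ⟨e, he, hfe⟩ := hf.surjOn (by simpa using hb)
      exact ⟨e, SimpleGraph.mem_edgeFinset.mpr he, hfe⟩
    · intro e _; rfl
  have hIcc : ∑ i ∈ Finset.Icc 1 m, i = ∑ i ∈ Finset.range m, (i + 1) := by
    rw [← Finset.Ico_add_one_right_eq_Icc, Finset.sum_Ico_eq_sum_range]
    simp [add_comm]
  have hr : ∀ k : ℕ, 2 * ∑ i ∈ Finset.range k, (i + 1) = k * (k + 1) := by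
    intro k
    have h := Finset.sum_range_id_mul_two (k + 1)
    rw [Finset.sum_range_succ'] at h
    simp only [add_zero, Nat.add_sub_cancel] at h
    calc 2 * ∑ i ∈ Finset.range k, (i + 1) = (∑ i ∈ Finset.range k, (i + 1)) * 2 := by ring
      _ = (k + 1) * k := h
      _ = k * (k + 1) := by ring
  have e1 : ∑ i ∈ Finset.range n, (i + 1) = 2 * ∑ i ∈ Finset.range m, (i + 1) := by
    rw [← hsum, hhand, hedge, hIcc]
  have key : n * (n + 1) = 2 * (m * (m + 1)) := by
    calc n * (n + 1) = 2 * ∑ i ∈ Finset.range n, (i + 1) := (hr n).symm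
      _ = 2 * (2 * ∑ i ∈ Finset.range m, (i + 1)) := by rw [e1]
      _ = 2 * (m * (m + 1)) := by rw [hr m]
  have : (n : ℤ) * (n + 1) = 2 * ((m : ℤ) * (m + 1)) := by exact_mod_cast key
  nlinarith [this]
end

section
/- The negative Pell equation (2n+1)² − 2(2m+1)² = −1 has infinitely many solutions in positive integers (n, m); in particular (n,m) = (3,2), (20,14), (119,84), and (696,492) are solutions. -/
def pellSeq : ℕ → ℕ × ℕ
  | 0 => (3, 2)
  | k + 1 =>
    let p := pellSeq k
    (3 * p.1 + 4 * p.2 + 3, 2 * p.1 + 3 * p.2 + 2)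

lemma pellSeq_mem (k : ℕ) :
    0 < (pellSeq k).1 ∧ 0 < (pellSeq k).2 ∧
      (2 * ((pellSeq k).1 : ℤ) + 1) ^ 2 - 2 * (2 * ((pellSeq k).2 : ℤ) + 1) ^ 2 = -1 := by
  induction k with
  | zero => norm_num [pellSeq]
  | succ k ih =>
    obtain ⟨h1, h2, h3⟩ := ih
    refine ⟨by simp [pellSeq], by simp [pellSeq], ?_⟩
    simp only [pellSeq]
    push_cast
    linear_combination h3

lemma pellSeq_mono : StrictMono fun k => (pellSeq k).1 := by
  apply strictMono_nat_of_lt_succ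
  intro k
  have := (pellSeq_mem k).1
  simp [pellSeq]
  omega

theorem stmt12 :
    {p : ℕ × ℕ | 0 < p.1 ∧ 0 < p.2 ∧
      (2 * (p.1 : ℤ) + 1) ^ 2 - 2 * (2 * (p.2 : ℤ) + 1) ^ 2 = -1}.Infinite ∧
    ((3, 2) : ℕ × ℕ) ∈ {p : ℕ × ℕ | 0 < p.1 ∧ 0 < p.2 ∧
      (2 * (p.1 : ℤ) + 1) ^ 2 - 2 * (2 * (p.2 : ℤ) + 1) ^ 2 = -1} ∧
    ((20, 14) : ℕ × ℕ) ∈ {p : ℕ × ℕ | 0 < p.1 ∧ 0 < p.2 ∧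
      (2 * (p.1 : ℤ) + 1) ^ 2 - 2 * (2 * (p.2 : ℤ) + 1) ^ 2 = -1} ∧
    ((119, 84) : ℕ × ℕ) ∈ {p : ℕ × ℕ | 0 < p.1 ∧ 0 < p.2 ∧
      (2 * (p.1 : ℤ) + 1) ^ 2 - 2 * (2 * (p.2 : ℤ) + 1) ^ 2 = -1} ∧
    ((696, 492) : ℕ × ℕ) ∈ {p : ℕ × ℕ | 0 < p.1 ∧ 0 < p.2 ∧
      (2 * (p.1 : ℤ) + 1) ^ 2 - 2 * (2 * (p.2 : ℤ) + 1) ^ 2 = -1} := by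
  refine ⟨?_, by norm_num, by norm_num, by norm_num, by norm_num⟩
  exact Set.infinite_of_injective_forall_mem
    (f := pellSeq)
    (fun a b hab => pellSeq_mono.injective (congrArg Prod.fst hab))
    pellSeq_mem
end
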